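/- arXiv:0802.1375 — 7 statements merged into one kernel-verified Lean document; each statement's English description precedes it below -/
import Mathlib

section
/- Let A: X → X* be continuous, linear, symmetric, and monotone. Then for every (x,x*) ∈ X×X*, q_A*(x* + Ax) = q_A(x) + ⟨x,x*⟩ + q_A*(x*); in particular (taking x* = 0), q_A*(Ax) = q_A(x) for every x ∈ X. -/
/-! For symmetric `A` the quadratic form satisfies `q_A(x + z) = q_A(x) + ⟨z, Ax⟩ + q_A(z)`.
Substituting `y = x + z` in the supremum defining `q_A*(x* + Ax)` therefore splits off the
constant `q_A(x) + ⟨x, x*⟩` and leaves exactly the supremum defining `q_A*(x*)`. For `x* = 0`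
one uses `q_A*(0) = -inf q_A = 0`, which holds because `q_A ≥ 0` by monotonicity. -/

noncomputable section
open Filter Topology

/-- The Fenchel conjugate of `F : X × X* → (-∞,+∞]`, as a function on `X* × X`:
`F*(x*,x) = sup_{(y,y*)} (⟨y,x*⟩ + ⟨x,y*⟩ - F(y,y*))`. -/
def conj2 {X : Type*} [NormedAddCommGroup X] [NormedSpace ℝ X]
    (F : X × (X →L[ℝ] ℝ) → EReal) : (X →L[ℝ] ℝ) × X → EReal :=
  fun p => ⨆ q : X × (X →L[ℝ] ℝ), ((p.1 q.1 + q.2 p.2 : ℝ) : EReal) - F q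

/-- `F` is autoconjugate: `F*(x*,x) = F(x,x*)` for all `(x,x*)`. -/
def Autoconjugate {X : Type*} [NormedAddCommGroup X] [NormedSpace ℝ X]
    (F : X × (X →L[ℝ] ℝ) → EReal) : Prop :=
  ∀ (x : X) (x' : X →L[ℝ] ℝ), conj2 F (x', x) = F (x, x')

/-- `F` is a representer for the set-valued operator `A : X ⇉ X*`:
`gra A = {(x,x*) : F(x,x*) = ⟨x,x*⟩}`. -/
def IsRepresenter {X : Type*} [NormedAddCommGroup X] [NormedSpace ℝ X]
    (F : X × (X →L[ℝ] ℝ) → EReal) (A : X → Set (X →L[ℝ] ℝ)) : Prop :=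
  ∀ (x : X) (x' : X →L[ℝ] ℝ), x' ∈ A x ↔ F (x, x') = ((x' x : ℝ) : EReal)

/-- A set-valued operator `A : X ⇉ X*` is monotone. -/
def MonotoneOp {X : Type*} [NormedAddCommGroup X] [NormedSpace ℝ X]
    (A : X → Set (X →L[ℝ] ℝ)) : Prop :=
  ∀ ⦃x y : X⦄ ⦃x' y' : X →L[ℝ] ℝ⦄, x' ∈ A x → y' ∈ A y → 0 ≤ (x' - y') (x - y)

/-- A set-valued operator is maximal monotone if it is monotone and admits no proper
monotone extension (in the sense of graph inclusion). -/
def MaximalMonotoneOp {X : Type*} [NormedAddCommGroup X] [NormedSpace ℝ X]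
    (A : X → Set (X →L[ℝ] ℝ)) : Prop :=
  MonotoneOp A ∧ ∀ B : X → Set (X →L[ℝ] ℝ), MonotoneOp B → (∀ x, A x ⊆ B x) → B = A

/-- The quadratic function `q_A(x) = ½⟨x,Ax⟩` associated with a continuous linear
`A : X → X*`. -/
def qF {X : Type*} [NormedAddCommGroup X] [NormedSpace ℝ X]
    (A : X →L[ℝ] X →L[ℝ] ℝ) : X → ℝ :=
  fun x => (1 / 2) * A x x

/-- The Fenchel conjugate of a real-valued function `φ : X → ℝ`, as an `EReal`-valued
function on `X*`: `φ*(x*) = sup_y (⟨y,x*⟩ - φ(y))`. -/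
def legendre {X : Type*} [NormedAddCommGroup X] [NormedSpace ℝ X]
    (φ : X → ℝ) : (X →L[ℝ] ℝ) → EReal :=
  fun x' => ⨆ y : X, ((x' y - φ y : ℝ) : EReal)

/-- The symmetric part `A₊ = ½A + ½A*` of a continuous linear `A : X → X*`, where the
adjoint (restricted to `X`) is `A.flip`. -/
def symPart {X : Type*} [NormedAddCommGroup X] [NormedSpace ℝ X]
    (A : X →L[ℝ] X →L[ℝ] ℝ) : X →L[ℝ] X →L[ℝ] ℝ :=
  (1 / 2 : ℝ) • (A + A.flip)

/-- The antisymmetric part `A∘ = ½A - ½A*` of a continuous linear `A : X → X*`. -/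
def antiPart {X : Type*} [NormedAddCommGroup X] [NormedSpace ℝ X]
    (A : X →L[ℝ] X →L[ℝ] ℝ) : X →L[ℝ] X →L[ℝ] ℝ :=
  (1 / 2 : ℝ) • (A - A.flip)

/-- The Fitzpatrick function of a continuous linear `A : X → X*`:
`F_A(x,x*) = sup_y (⟨x,Ay⟩ + ⟨y,x*⟩ - ⟨y,Ay⟩)`. -/
def fitz {X : Type*} [NormedAddCommGroup X] [NormedSpace ℝ X]
    (A : X →L[ℝ] X →L[ℝ] ℝ) : X × (X →L[ℝ] ℝ) → EReal :=
  fun p => ⨆ y : X, ((A y p.1 + p.2 y - A y y : ℝ) : EReal)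

theorem EReal.coe_add_iSup {ι : Sort*} (c : ℝ) (f : ι → EReal) :
    (c : EReal) + ⨆ i, f i = ⨆ i, ((c : EReal) + f i) :=
  Monotone.map_iSup_of_continuousAt (f := fun t => (c : EReal) + t)
    ((EReal.continuousAt_add (Or.inl (EReal.coe_ne_top c)) (Or.inl (EReal.coe_ne_bot c))).comp
      (continuousAt_const.prodMk continuousAt_id))
    (fun _ _ h => add_le_add_right h _) (EReal.add_bot _)

section Legendre

variable {X : Type*} [NormedAddCommGroup X] [NormedSpace ℝ X]

lemma legendre_eq_iSup_add (φ : X → ℝ) (x' : X →L[ℝ] ℝ) (x : X) :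
    legendre φ x' = ⨆ z : X, ((x' (x + z) - φ (x + z) : ℝ) : EReal) :=
  ((Equiv.addLeft x).iSup_comp (g := fun y => ((x' y - φ y : ℝ) : EReal))).symm

lemma legendre_zero_of_nonneg {φ : X → ℝ} (hφ : ∀ y, 0 ≤ φ y) (h0 : φ 0 = 0) :
    legendre φ 0 = 0 := by
  apply le_antisymm
  · refine iSup_le fun y => ?_
    simpa using hφ y
  · exact le_iSup_of_le 0 (by simp [h0])

variable {A : X →L[ℝ] X →L[ℝ] ℝ}

lemma qF_add (hsym : ∀ x y : X, A x y = A y x) (x z : X) :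
    qF A (x + z) = qF A x + A x z + qF A z := by
  simp only [qF, map_add, add_apply, hsym z x]
  ring

lemma qF_nonneg (hmono : ∀ x : X, 0 ≤ A x x) (x : X) : 0 ≤ qF A x :=
  mul_nonneg (by norm_num) (hmono x)

theorem legendre_qF_add_apply (hsym : ∀ x y : X, A x y = A y x) (x : X) (x' : X →L[ℝ] ℝ) :
    legendre (qF A) (x' + A x)
      = ((qF A x : ℝ) : EReal) + ((x' x : ℝ) : EReal) + legendre (qF A) x' := by
  have split : ∀ z : X, (x' + A x) (x + z) - qF A (x + z)
      = (qF A x + x' x) + (x' z - qF A z) := by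
    intro z
    rw [qF_add hsym]
    simp only [qF, add_apply, map_add]
    ring
  rw [legendre_eq_iSup_add _ _ x, ← EReal.coe_add, legendre, EReal.coe_add_iSup]
  exact iSup_congr fun z => by rw [split, EReal.coe_add]

end Legendre

theorem stmt1_general {X : Type*} [NormedAddCommGroup X] [NormedSpace ℝ X]
    (A : X →L[ℝ] X →L[ℝ] ℝ)
    (hsym : ∀ x y : X, A x y = A y x)
    (hmono : ∀ x : X, 0 ≤ A x x) :
    (∀ (x : X) (x' : X →L[ℝ] ℝ),
      legendre (qF A) (x' + A x)
        = ((qF A x : ℝ) : EReal) + ((x' x : ℝ) : EReal) + legendre (qF A) x') ∧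
    ∀ x : X, legendre (qF A) (A x) = ((qF A x : ℝ) : EReal) := by
  refine ⟨legendre_qF_add_apply hsym, fun x => ?_⟩
  have h := legendre_qF_add_apply hsym x 0
  rwa [zero_add, legendre_zero_of_nonneg (qF_nonneg hmono) (by simp [qF]),
    zero_apply, EReal.coe_zero, add_zero, add_zero] at h

/-- Proposition 2.2. For `A : X → X*` continuous, linear, symmetric and
monotone: `q_A*(x* + Ax) = q_A(x) + ⟨x,x*⟩ + q_A*(x*)` for all `(x,x*)`, and in particular
`q_A*(Ax) = q_A(x)` for all `x`. -/
theorem stmt1 {X : Type*} [NormedAddCommGroup X] [NormedSpace ℝ X] [CompleteSpace X]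
    (hrefl : Function.Surjective (NormedSpace.inclusionInDoubleDual ℝ X))
    (A : X →L[ℝ] X →L[ℝ] ℝ)
    (hsym : ∀ x y : X, A x y = A y x)
    (hmono : ∀ x : X, 0 ≤ A x x) :
    (∀ (x : X) (x' : X →L[ℝ] ℝ),
      legendre (qF A) (x' + A x)
        = ((qF A x : ℝ) : EReal) + ((x' x : ℝ) : EReal) + legendre (qF A) x') ∧
    ∀ x : X, legendre (qF A) (A x) = ((qF A x : ℝ) : EReal) :=
  stmt1_general A hsym hmono
end
end

section
/- Let A: X → X* be continuous, linear, and monotone. Then the Fitzpatrick function of A satisfies, for every (x,x*) ∈ X×X*: F_A(x,x*) = 2 q_{A₊}*(½x* + ½A*x) = ½ q_{A₊}*(x* + A*x). -/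
noncomputable section
open Filter Topology

lemma myMulISup {ι : Sort*} (c : ℝ) (hc : 0 < c) (f : ι → EReal) :
    (c : EReal) * ⨆ i, f i = ⨆ i, (c : EReal) * f i := by
  have hc' : (0 : EReal) < (c : EReal) := EReal.coe_pos.2 hc
  have hct : (c : EReal) ≠ ⊤ := EReal.coe_ne_top c
  apply le_antisymm
  · rw [mul_comm, ← EReal.le_div_iff_mul_le hc' hct]
    refine iSup_le fun i => ?_
    rw [EReal.le_div_iff_mul_le hc' hct, mul_comm]
    exact le_iSup (fun i => (c : EReal) * f i) i
  · exact iSup_le fun i => mul_le_mul_of_nonneg_left (le_iSup f i) hc'.le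

lemma myMulISupReal {ι : Sort*} (c : ℝ) (hc : 0 < c) (g : ι → ℝ) :
    (c : EReal) * (⨆ i, ((g i : ℝ) : EReal)) = ⨆ i, ((c * g i : ℝ) : EReal) := by
  rw [myMulISup c hc]
  exact iSup_congr fun i => (EReal.coe_mul c (g i)).symm

/-- first part of Proposition 2.3. For `A : X → X*` continuous, linear
and monotone: `F_A(x,x*) = 2 q_{A₊}*(½x* + ½A*x) = ½ q_{A₊}*(x* + A*x)`. -/
theorem stmt2 {X : Type*} [NormedAddCommGroup X] [NormedSpace ℝ X] [CompleteSpace X]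
    (hrefl : Function.Surjective (NormedSpace.inclusionInDoubleDual ℝ X))
    (A : X →L[ℝ] X →L[ℝ] ℝ)
    (hmono : ∀ x : X, 0 ≤ A x x) :
    ∀ (x : X) (x' : X →L[ℝ] ℝ),
      fitz A (x, x')
          = (2 : EReal) * legendre (qF (symPart A)) ((1 / 2 : ℝ) • x' + (1 / 2 : ℝ) • A.flip x)
      ∧ fitz A (x, x')
          = ((1 / 2 : ℝ) : EReal) * legendre (qF (symPart A)) (x' + A.flip x) := by
  intro x x'
  constructor
  · have h1 : ∀ y : X, ((1 / 2 : ℝ) • x' + (1 / 2 : ℝ) • A.flip x) y - qF (symPart A) y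
        = (1 / 2 : ℝ) * (A y x + x' y - A y y) := by
      intro y
      simp only [qF, symPart, ContinuousLinearMap.add_apply, ContinuousLinearMap.smul_apply,
        ContinuousLinearMap.flip_apply, smul_eq_mul]
      ring
    have : legendre (qF (symPart A)) ((1 / 2 : ℝ) • x' + (1 / 2 : ℝ) • A.flip x)
        = ⨆ y : X, (((1 / 2 : ℝ) * (A y x + x' y - A y y) : ℝ) : EReal) :=
      iSup_congr fun y => by rw [h1 y]
    rw [this, show (2 : EReal) = ((2 : ℝ) : EReal) by norm_cast,
      myMulISupReal 2 (by norm_num)]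
    exact iSup_congr fun y => congrArg _ (by ring)
  · rw [show ((1 / 2 : ℝ) : EReal) * legendre (qF (symPart A)) (x' + A.flip x)
        = ⨆ y : X, (((1 / 2 : ℝ) * ((x' + A.flip x) y - qF (symPart A) y) : ℝ) : EReal) from
        myMulISupReal _ (by norm_num) _]
    let e : X ≃ X :=
      ⟨fun z => (2 : ℝ) • z, fun z => (2⁻¹ : ℝ) • z,
        fun z => by show (2⁻¹ : ℝ) • (2 : ℝ) • z = z; rw [smul_smul]; norm_num,
        fun z => by show (2 : ℝ) • (2⁻¹ : ℝ) • z = z; rw [smul_smul]; norm_num⟩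
    rw [← e.iSup_comp
      (g := fun y => (((1 / 2 : ℝ) * ((x' + A.flip x) y - qF (symPart A) y) : ℝ) : EReal))]
    refine iSup_congr fun y => congrArg _ ?_
    show A y x + x' y - A y y = (1 / 2 : ℝ) * ((x' + A.flip x) (e y) - qF (symPart A) (e y))
    have he : e y = (2 : ℝ) • y := rfl
    rw [he]
    simp only [qF, symPart, ContinuousLinearMap.add_apply, ContinuousLinearMap.smul_apply,
      ContinuousLinearMap.flip_apply, map_smul, smul_eq_mul]
    ring
end
end

section
/- Let A: X → X* be continuous, linear, and monotone. Then the Fenchel conjugate of the Fitzpatrick function of A satisfies, for every (x,x*) ∈ X×X*: F_A*(x*,x) = ι_{gra A}(x,x*) + ⟨x,Ax⟩, i.e. F_A*(x*,x) = ⟨x,Ax⟩ if x* = Ax, and F_A*(x*,x) = +∞ otherwise. -/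
noncomputable section
open scoped Classical
open Filter Topology

/-! On the graph: taking `x` in the supremum defining `F_A` gives
`F_A(y,y*) ≥ ⟨y,Ax⟩ + ⟨x,y*⟩ - ⟨x,Ax⟩`, so `F_A*(Ax,x) ≤ ⟨x,Ax⟩`; monotonicity gives
`F_A(x,Ax) = ⟨x,Ax⟩`, and testing `F_A*(Ax,x)` at `(x,Ax)` yields equality.
Off the graph: monotonicity gives `F_A(y,-A*y) ≤ 0`, hence `F_A*(x*,x) ≥ ⟨y, x* - Ax⟩` for every `y`,
and the nonzero functional `x* - Ax` is unbounded above. -/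

section Fitzpatrick

variable {X : Type*} [NormedAddCommGroup X] [NormedSpace ℝ X]

lemma le_conj2 (F : X × (X →L[ℝ] ℝ) → EReal) (p : (X →L[ℝ] ℝ) × X) (q : X × (X →L[ℝ] ℝ)) :
    ((p.1 q.1 + q.2 p.2 : ℝ) : EReal) - F q ≤ conj2 F p :=
  le_iSup (fun q : X × (X →L[ℝ] ℝ) => ((p.1 q.1 + q.2 p.2 : ℝ) : EReal) - F q) q

lemma le_fitz (A : X →L[ℝ] X →L[ℝ] ℝ) (p : X × (X →L[ℝ] ℝ)) (y : X) :
    ((A y p.1 + p.2 y - A y y : ℝ) : EReal) ≤ fitz A p :=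
  le_iSup (fun y : X => ((A y p.1 + p.2 y - A y y : ℝ) : EReal)) y

lemma fitz_apply_self (A : X →L[ℝ] X →L[ℝ] ℝ) (hmono : ∀ x : X, 0 ≤ A x x) (x : X) :
    fitz A (x, A x) = ((A x x : ℝ) : EReal) := by
  apply le_antisymm
  · refine iSup_le fun y => ?_
    have h := hmono (x - y)
    simp only [map_sub, sub_apply] at h
    exact_mod_cast (by linarith : A y x + A x y - A y y ≤ A x x)
  · simpa using le_fitz A (x, A x) x

lemma fitz_neg_flip_nonpos (A : X →L[ℝ] X →L[ℝ] ℝ) (hmono : ∀ x : X, 0 ≤ A x x) (y : X) :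
    fitz A (y, -A.flip y) ≤ 0 := by
  refine iSup_le fun z => ?_
  have h : A z y + (-A.flip y) z - A z z ≤ 0 := by
    simp only [neg_apply, ContinuousLinearMap.flip_apply]
    linarith [hmono z]
  exact_mod_cast h

lemma conj2_fitz_apply_self (A : X →L[ℝ] X →L[ℝ] ℝ) (hmono : ∀ x : X, 0 ≤ A x x) (x : X) :
    conj2 (fitz A) (A x, x) = ((A x x : ℝ) : EReal) := by
  apply le_antisymm
  · refine iSup_le fun q => ?_
    calc ((A x q.1 + q.2 x : ℝ) : EReal) - fitz A q
        ≤ ((A x q.1 + q.2 x : ℝ) : EReal) - ((A x q.1 + q.2 x - A x x : ℝ) : EReal) :=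
          EReal.sub_le_sub le_rfl (le_fitz A q x)
      _ = ((A x x : ℝ) : EReal) := by rw [← EReal.coe_sub]; norm_cast; ring
  · calc ((A x x : ℝ) : EReal)
        = ((A x x + A x x : ℝ) : EReal) - fitz A (x, A x) := by
          rw [fitz_apply_self A hmono, ← EReal.coe_sub]; norm_cast; ring
      _ ≤ conj2 (fitz A) (A x, x) := le_conj2 (fitz A) (A x, x) (x, A x)

lemma sub_apply_le_conj2_fitz (A : X →L[ℝ] X →L[ℝ] ℝ) (hmono : ∀ x : X, 0 ≤ A x x)
    (x : X) (x' : X →L[ℝ] ℝ) (y : X) :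
    (((x' - A x) y : ℝ) : EReal) ≤ conj2 (fitz A) (x', x) :=
  calc (((x' - A x) y : ℝ) : EReal)
      = ((x' y + (-A.flip y) x : ℝ) : EReal) - 0 := by
        rw [sub_zero, sub_apply, neg_apply, ContinuousLinearMap.flip_apply, sub_eq_add_neg]
    _ ≤ ((x' y + (-A.flip y) x : ℝ) : EReal) - fitz A (y, -A.flip y) :=
        EReal.sub_le_sub le_rfl (fitz_neg_flip_nonpos A hmono y)
    _ ≤ conj2 (fitz A) (x', x) := le_conj2 (fitz A) (x', x) (y, -A.flip y)

lemma conj2_fitz_eq_top (A : X →L[ℝ] X →L[ℝ] ℝ) (hmono : ∀ x : X, 0 ≤ A x x)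
    {x : X} {x' : X →L[ℝ] ℝ} (hx : x' ≠ A x) :
    conj2 (fitz A) (x', x) = ⊤ := by
  have hsurj : Function.Surjective (x' - A x) :=
    LinearMap.surjective (f := (x' - A x).toLinearMap) fun h => sub_ne_zero.mpr hx
      (ContinuousLinearMap.coe_injective h)
  refine (EReal.eq_top_iff_forall_lt _).mpr fun r => ?_
  obtain ⟨y, hy⟩ := hsurj (r + 1)
  calc (r : EReal) < ((r + 1 : ℝ) : EReal) := by exact_mod_cast lt_add_one r
    _ = (((x' - A x) y : ℝ) : EReal) := by rw [hy]
    _ ≤ conj2 (fitz A) (x', x) := sub_apply_le_conj2_fitz A hmono x x' y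

end Fitzpatrick

theorem stmt3_general {X : Type*} [NormedAddCommGroup X] [NormedSpace ℝ X]
    (A : X →L[ℝ] X →L[ℝ] ℝ)
    (hmono : ∀ x : X, 0 ≤ A x x) :
    ∀ (x : X) (x' : X →L[ℝ] ℝ),
      conj2 (fitz A) (x', x) = if x' = A x then ((A x x : ℝ) : EReal) else ⊤ := by
  intro x x'
  split_ifs with hx
  · rw [hx]
    exact conj2_fitz_apply_self A hmono x
  · exact conj2_fitz_eq_top A hmono hx

/-- second part of Proposition 2.3. For `A : X → X*` continuous, linear
and monotone: `F_A*(x*,x) = ι_{gra A}(x,x*) + ⟨x,Ax⟩`, i.e. it equals `⟨x,Ax⟩` when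
`x* = Ax` and `+∞` otherwise. -/
theorem stmt3 {X : Type*} [NormedAddCommGroup X] [NormedSpace ℝ X] [CompleteSpace X]
    (hrefl : Function.Surjective (NormedSpace.inclusionInDoubleDual ℝ X))
    (A : X →L[ℝ] X →L[ℝ] ℝ)
    (hmono : ∀ x : X, 0 ≤ A x x) :
    ∀ (x : X) (x' : X →L[ℝ] ℝ),
      conj2 (fitz A) (x', x) = if x' = A x then ((A x x : ℝ) : EReal) else ⊤ :=
  stmt3_general A hmono
end
end

section
/- Let F₁: X×X* → (−∞,+∞] be autoconjugate, and let A₂: X → X* be continuous, linear, and antisymmetric. Then the function (x,x*) ↦ F₁(x, x* − A₂x) is an autoconjugate representer for the operator G(F₁) + A₂. -/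
noncomputable section
open scoped Classical
open Filter Topology

/-- Proposition 2.5. If `F₁` is autoconjugate and `A₂ : X → X*` is
continuous, linear and antisymmetric, then `(x,x*) ↦ F₁(x, x* - A₂x)` is an autoconjugate
representer for `G(F₁) + A₂`. -/
theorem stmt4 {X : Type*} [NormedAddCommGroup X] [NormedSpace ℝ X] [CompleteSpace X]
    (hrefl : Function.Surjective (NormedSpace.inclusionInDoubleDual ℝ X))
    (F₁ : X × (X →L[ℝ] ℝ) → EReal)
    (hF₁bot : ∀ p, F₁ p ≠ ⊥)
    (hF₁ : Autoconjugate F₁)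
    (A₂ : X →L[ℝ] X →L[ℝ] ℝ)
    (hanti : ∀ x y : X, A₂ x y = -(A₂ y x)) :
    Autoconjugate (fun p : X × (X →L[ℝ] ℝ) => F₁ (p.1, p.2 - A₂ p.1)) ∧
    IsRepresenter (fun p : X × (X →L[ℝ] ℝ) => F₁ (p.1, p.2 - A₂ p.1))
      (fun x => {x' | ∃ a ∈ {a : X →L[ℝ] ℝ | F₁ (x, a) = ((a x : ℝ) : EReal)},
        x' = a + A₂ x}) := by
  have hA2 : ∀ x : X, A₂ x x = 0 := by
    intro x; have := hanti x x; linarith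
  constructor
  · intro x x'
    have key : conj2 (fun p : X × (X →L[ℝ] ℝ) => F₁ (p.1, p.2 - A₂ p.1)) (x', x)
        = conj2 F₁ (x' - A₂ x, x) := by
      unfold conj2
      set e : (X × (X →L[ℝ] ℝ)) ≃ (X × (X →L[ℝ] ℝ)) :=
        { toFun := fun q => (q.1, q.2 + A₂ q.1)
          invFun := fun q => (q.1, q.2 - A₂ q.1)
          left_inv := fun q => by simp
          right_inv := fun q => by simp }
      rw [← e.iSup_comp (g := fun q : X × (X →L[ℝ] ℝ) =>
        (((x' q.1 + q.2 x : ℝ) : EReal) - F₁ (q.1, q.2 - A₂ q.1)))]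
      apply iSup_congr
      intro q
      have h1 : (q.2 + A₂ q.1) x = q.2 x + A₂ q.1 x := by simp
      have h2 : A₂ q.1 x = -(A₂ x q.1) := hanti q.1 x
      have hr : (x' q.1 + (e q).2 x : ℝ) = ((x' - A₂ x) q.1 + q.2 x : ℝ) := by
        simp only [e, Equiv.coe_fn_mk, h1, h2, ContinuousLinearMap.sub_apply]
        ring
      show (((x' q.1 + (e q).2 x : ℝ) : EReal) - F₁ ((e q).1, (e q).2 - A₂ (e q).1))
          = _
      have hF : ((e q).1, (e q).2 - A₂ (e q).1) = q := by simp [e]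
      rw [hF, hr]
    show conj2 (fun p : X × (X →L[ℝ] ℝ) => F₁ (p.1, p.2 - A₂ p.1)) (x', x)
        = F₁ (x, x' - A₂ x)
    rw [key, hF₁ x (x' - A₂ x)]
  · intro x x'
    simp only [Set.mem_setOf_eq]
    constructor
    · rintro ⟨a, ha, rfl⟩
      simp only [add_sub_cancel_right]
      have h2 : ((a + A₂ x) x : ℝ) = a x := by simp [hA2 x]
      rw [h2]; exact ha
    · intro h
      exact ⟨x' - A₂ x, by
        have h2 : ((x' - A₂ x) x : ℝ) = x' x := by simp [hA2 x]
        rw [h2]; exact h, by simp⟩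
end
end

section
/- Let f: X → (−∞,+∞] be proper, lower semicontinuous, and convex, and let A: X → X* be continuous, linear, and antisymmetric. Then the function (x,x*) ↦ f(x) + f*(x* − Ax) is an autoconjugate representer for the operator ∂f + A. -/
noncomputable section
open scoped Classical
open Filter Topology

/-- The Fenchel conjugate of an extended-real-valued `f : X → (-∞,+∞]`:
`f*(x*) = sup_x (⟨x,x*⟩ - f(x))`. -/
def econj {X : Type*} [NormedAddCommGroup X] [NormedSpace ℝ X]
    (f : X → EReal) : (X →L[ℝ] ℝ) → EReal :=
  fun x' => ⨆ x : X, ((x' x : ℝ) : EReal) - f x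

/-- The subdifferential of `f : X → (-∞,+∞]`:
`∂f(x) = {x* : ∀ y, ⟨y-x,x*⟩ + f(x) ≤ f(y)}`. -/
def esubdiff {X : Type*} [NormedAddCommGroup X] [NormedSpace ℝ X]
    (f : X → EReal) : X → Set (X →L[ℝ] ℝ) :=
  fun x => {x' | ∀ y : X, ((x' (y - x) : ℝ) : EReal) + f x ≤ f y}

/-! Write `F(x, x*) = f x + f*(x* - Ax)`. The shear `(y, y*) ↦ (y, y* + Ay)` splits the
conjugate `F*(x*, x)` into `f*(x* - Ax) + f**(x)`, the cross terms cancelling by antisymmetry of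
`A`, and `f** = f` on `X` by the Fenchel–Moreau theorem: a point strictly below the graph of `f`
is separated from its closed convex epigraph by a hyperplane, which (tilted by an affine minorant
of `f` when it is vertical) gives an affine minorant of `f` passing above the point. Finally `F`
represents `∂f + A` because `⟨x, Ax⟩ = 0` and `∂f` is the equality case of the Fenchel–Young
inequality `⟨x, x*⟩ ≤ f x + f* x*`. -/

namespace EReal

lemma iSup_prod_add {ι κ : Type*} (a : ι → EReal) (b : κ → EReal) :
    ⨆ p : ι × κ, a p.1 + b p.2 = (⨆ i, a i) + ⨆ j, b j := by
  refine le_antisymm (iSup_le fun p => add_le_add (le_iSup a p.1) (le_iSup b p.2)) ?_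
  refine add_le_of_forall_lt fun a' ha' b' hb' => ?_
  obtain ⟨i, hi⟩ := lt_iSup_iff.1 ha'
  obtain ⟨j, hj⟩ := lt_iSup_iff.1 hb'
  exact (add_le_add hi.le hj.le).trans (le_iSup (fun p : ι × κ => a p.1 + b p.2) (i, j))

lemma coe_add_sub_add (r s : ℝ) {a b : EReal} (ha : a ≠ ⊥) (hb : b ≠ ⊥) :
    ((r + s : ℝ) : EReal) - (a + b) = (r - a) + (s - b) := by
  induction a <;> induction b <;> simp_all [← coe_add, ← coe_sub]
  ring

lemma coe_sub_coe_sub (r : ℝ) {a : EReal} (ha : a ≠ ⊥) : (r : EReal) - (r - a) = a := by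
  induction a <;> simp_all [← coe_sub]

lemma coe_add_eq_coe_iff (r s : ℝ) (a : EReal) : (r : EReal) + a = s ↔ a = (s - r : ℝ) := by
  induction a <;> simp [← coe_add, -coe_sub, eq_sub_iff_add_eq, add_comm]

end EReal

section Conjugate

variable {X : Type*} [NormedAddCommGroup X] [NormedSpace ℝ X]

def IsAffineMinorant (f : X → EReal) (g : X →L[ℝ] ℝ) (β : ℝ) : Prop :=
  ∀ y, ((g y - β : ℝ) : EReal) ≤ f y

lemma coe_sub_le_econj (f : X → EReal) (g : X →L[ℝ] ℝ) (y : X) :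
    (g y : EReal) - f y ≤ econj f g :=
  le_iSup (fun y => (g y : EReal) - f y) y

lemma econj_le_coe_iff {f : X → EReal} {g : X →L[ℝ] ℝ} {β : ℝ} :
    econj f g ≤ β ↔ IsAffineMinorant f g β := by
  refine iSup_le_iff.trans (forall_congr' fun y => ?_)
  induction f y <;> simp [← EReal.coe_sub]
  constructor <;> intro <;> linarith

lemma econj_ne_bot {f : X → EReal} (hproper : ∃ x, f x ≠ ⊤) (g : X →L[ℝ] ℝ) : econj f g ≠ ⊥ := by
  obtain ⟨x₀, hx₀⟩ := hproper
  refine ne_bot_of_le_ne_bot ?_ (coe_sub_le_econj f g x₀)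
  revert hx₀
  induction f x₀ <;> simp [← EReal.coe_sub]

lemma mem_esubdiff_iff_add_econj_eq {f : X → EReal} (hbot : ∀ x, f x ≠ ⊥)
    (hproper : ∃ x, f x ≠ ⊤) {x : X} {x' : X →L[ℝ] ℝ} :
    x' ∈ esubdiff f x ↔ f x + econj f x' = x' x := by
  have hlower := coe_sub_le_econj f x' x
  obtain ⟨x₀, hx₀⟩ := hproper
  have hne_bot := econj_ne_bot ⟨x₀, hx₀⟩ x'
  have hbotx := hbot x
  unfold esubdiff
  revert hlower hbotx
  induction f x with
  | bot => simp
  | top =>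
    simp only [Set.mem_ofPred_eq, EReal.add_top_of_ne_bot (EReal.coe_ne_bot _),
      top_le_iff, EReal.top_add_of_ne_bot hne_bot, EReal.top_ne_coe, iff_false, not_forall]
    exact fun _ _ => ⟨x₀, hx₀⟩
  | coe a =>
    intro hlower _
    rw [← EReal.coe_sub] at hlower
    have hminorant : (∀ y, ((x' (y - x) : ℝ) : EReal) + a ≤ f y) ↔
        IsAffineMinorant f x' (x' x - a) :=
      forall_congr' fun y => by rw [← EReal.coe_add, map_sub, sub_add]
    show (∀ y, _) ↔ _
    rw [hminorant, ← econj_le_coe_iff, EReal.coe_add_eq_coe_iff, le_antisymm_iff,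
      and_iff_left hlower]

end Conjugate

lemma LowerSemicontinuous.isClosed_realEpigraph {α : Type*} [TopologicalSpace α] {f : α → EReal}
    (hlsc : LowerSemicontinuous f) : IsClosed {p : α × ℝ | f p.1 ≤ p.2} :=
  hlsc.isClosed_epigraph.preimage
    (continuous_fst.prodMk (continuous_coe_real_ereal.comp continuous_snd))

section FenchelMoreau

variable {X : Type*} [NormedAddCommGroup X] [NormedSpace ℝ X] {f : X → EReal}

lemma convex_realEpigraph
    (hconv : ∀ (x y : X) (t : ℝ), 0 ≤ t → t ≤ 1 →
      f (t • x + (1 - t) • y) ≤ ((t : ℝ) : EReal) * f x + (((1 - t) : ℝ) : EReal) * f y) :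
    Convex ℝ {p : X × ℝ | f p.1 ≤ p.2} := by
  rintro ⟨x, s⟩ hx ⟨y, t⟩ hy a b ha hb hab
  obtain rfl : b = 1 - a := by linarith
  calc f (a • x + (1 - a) • y)
      ≤ (a : EReal) * f x + ((1 - a : ℝ) : EReal) * f y := hconv x y a ha (by linarith)
    _ ≤ (a : EReal) * s + ((1 - a : ℝ) : EReal) * t := by gcongr <;> exact_mod_cast ‹_›
    _ = ((a * s + (1 - a) * t : ℝ) : EReal) := by norm_cast

lemma exists_strict_separation_of_not_le (hcvx : Convex ℝ {p : X × ℝ | f p.1 ≤ p.2})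
    (hcl : IsClosed {p : X × ℝ | f p.1 ≤ p.2}) {z : X} {c : ℝ} (hz : ¬ f z ≤ c) :
    ∃ (ψ : X →L[ℝ] ℝ) (s u : ℝ),
      (∀ y (t : ℝ), f y ≤ t → ψ y + s * t < u) ∧ u < ψ z + s * c := by
  obtain ⟨φ, u, hφS, hφz⟩ := geometric_hahn_banach_closed_point hcvx hcl
    (show (z, c) ∉ _ from hz)
  have hφ : ∀ (y : X) (t : ℝ), φ (y, t) = φ.comp (.inl ℝ X ℝ) y + φ (0, 1) * t := fun y t => by
    rw [show ((y, t) : X × ℝ) = (y, 0) + t • (0, 1) by simp, map_add, map_smul, smul_eq_mul,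
      mul_comm]
    rfl
  exact ⟨_, _, u, fun y t hyt => hφ y t ▸ hφS (y, t) hyt, hφ z c ▸ hφz⟩

lemma separation_slope_nonpos {ψ : X →L[ℝ] ℝ} {s u : ℝ} {x₀ : X} (hx₀ : f x₀ ≠ ⊤)
    (hsep : ∀ y (t : ℝ), f y ≤ t → ψ y + s * t < u) : s ≤ 0 := by
  by_contra! hs
  set t := max (f x₀).toReal ((u - ψ x₀) / s)
  have hlt := hsep x₀ t ((EReal.le_coe_toReal hx₀).trans (EReal.coe_le_coe_iff.2 (le_max_left ..)))
  have hle : (u - ψ x₀) / s ≤ t := le_max_right ..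
  rw [div_le_iff₀ hs] at hle
  linarith

lemma exists_isAffineMinorant_lt_of_separation {ψ : X →L[ℝ] ℝ} {s u c : ℝ} {z : X} (hs : s < 0)
    (hsep : ∀ y (t : ℝ), f y ≤ t → ψ y + s * t < u) (hzc : u < ψ z + s * c) :
    ∃ g β, IsAffineMinorant f g β ∧ c < g z - β := by
  have hpos : 0 < -s := neg_pos.2 hs
  have hnormalize : ∀ y, ((-s)⁻¹ • ψ) y - u / -s = (ψ y - u) / -s := fun y => by
    simp only [smul_apply, smul_eq_mul]
    ring
  refine ⟨(-s)⁻¹ • ψ, u / -s, fun y => EReal.le_of_forall_lt_iff_le.1 fun t ht => ?_, ?_⟩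
  · have := hsep y t ht.le
    rw [EReal.coe_le_coe_iff, hnormalize, div_le_iff₀ hpos]
    linarith
  · rw [hnormalize, lt_div_iff₀ hpos]
    linarith

lemma IsAffineMinorant.add_smul {g ψ : X →L[ℝ] ℝ} {β u lam : ℝ} (h : IsAffineMinorant f g β)
    (hψ : ∀ y (t : ℝ), f y ≤ t → ψ y < u) (hlam : 0 ≤ lam) :
    IsAffineMinorant f (g + lam • ψ) (β + lam * u) := fun y =>
  EReal.le_of_forall_lt_iff_le.1 fun t ht => by
    have hg := EReal.coe_le_coe_iff.1 ((h y).trans ht.le)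
    have hψy := hψ y t ht.le
    simp only [add_apply, smul_apply, smul_eq_mul, EReal.coe_le_coe_iff]
    nlinarith

lemma exists_isAffineMinorant {x₀ : X} (hx₀ : f x₀ ≠ ⊤) (hx₀' : f x₀ ≠ ⊥)
    (hcvx : Convex ℝ {p : X × ℝ | f p.1 ≤ p.2}) (hcl : IsClosed {p : X × ℝ | f p.1 ≤ p.2}) :
    ∃ g β, IsAffineMinorant f g β := by
  obtain ⟨r₀, hr₀⟩ : ∃ r₀ : ℝ, f x₀ = r₀ := ⟨_, (EReal.coe_toReal hx₀ hx₀').symm⟩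
  obtain ⟨ψ, s, u, hsep, hzc⟩ := exists_strict_separation_of_not_le hcvx hcl
    (z := x₀) (c := r₀ - 1) (by rw [hr₀, EReal.coe_le_coe_iff]; linarith)
  have hs : s < 0 := by
    have := hsep x₀ _ hr₀.le
    linarith
  obtain ⟨g, β, hg, -⟩ := exists_isAffineMinorant_lt_of_separation hs hsep hzc
  exact ⟨g, β, hg⟩

lemma exists_isAffineMinorant_lt (hbot : ∀ x, f x ≠ ⊥) (hproper : ∃ x, f x ≠ ⊤)
    (hcvx : Convex ℝ {p : X × ℝ | f p.1 ≤ p.2}) (hcl : IsClosed {p : X × ℝ | f p.1 ≤ p.2})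
    {x : X} {r : ℝ} (hr : (r : EReal) < f x) :
    ∃ g β, IsAffineMinorant f g β ∧ r < g x - β := by
  obtain ⟨x₀, hx₀⟩ := hproper
  obtain ⟨ψ, s, u, hsep, hxr⟩ := exists_strict_separation_of_not_le hcvx hcl hr.not_ge
  rcases (separation_slope_nonpos hx₀ hsep).lt_or_eq with hs | rfl
  · exact exists_isAffineMinorant_lt_of_separation hs hsep hxr
  -- The separating hyperplane is vertical: tilt an affine minorant by a large multiple of it.
  obtain ⟨g, β, hg⟩ := exists_isAffineMinorant hx₀ (hbot x₀) hcvx hcl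
  have hgap : 0 < ψ x - u := by linarith
  set lam := |r - (g x - β)| / (ψ x - u) + 1
  have hlam : lam * (ψ x - u) = |r - (g x - β)| + (ψ x - u) := by
    rw [add_mul, div_mul_cancel₀ _ hgap.ne', one_mul]
  refine ⟨g + lam • ψ, β + lam * u, hg.add_smul (fun y t ht => by simpa using hsep y t ht)
    (by positivity), ?_⟩
  simp only [add_apply, smul_apply, smul_eq_mul]
  nlinarith [le_abs_self (r - (g x - β))]

theorem iSup_coe_sub_econj_eq (hbot : ∀ x, f x ≠ ⊥) (hproper : ∃ x, f x ≠ ⊤)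
    (hlsc : LowerSemicontinuous f)
    (hconv : ∀ (x y : X) (t : ℝ), 0 ≤ t → t ≤ 1 →
      f (t • x + (1 - t) • y) ≤ ((t : ℝ) : EReal) * f x + (((1 - t) : ℝ) : EReal) * f y)
    (x : X) : ⨆ g : X →L[ℝ] ℝ, (g x : EReal) - econj f g = f x := by
  refine le_antisymm (iSup_le fun g => ?_) (le_of_forall_lt_imp_le_of_dense fun c hc => ?_)
  · calc (g x : EReal) - econj f g ≤ g x - (g x - f x) :=
          EReal.sub_le_sub le_rfl (coe_sub_le_econj f g x)
      _ = f x := EReal.coe_sub_coe_sub _ (hbot x)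
  · obtain ⟨r, hcr, hr⟩ := EReal.exists_between_coe_real hc
    obtain ⟨g, β, hg, hrg⟩ := exists_isAffineMinorant_lt hbot hproper (convex_realEpigraph hconv)
      hlsc.isClosed_realEpigraph hr
    calc c ≤ r := hcr.le
      _ ≤ ((g x - β : ℝ) : EReal) := EReal.coe_le_coe_iff.2 hrg.le
      _ ≤ g x - econj f g := by
        rw [EReal.coe_sub]
        exact EReal.sub_le_sub le_rfl (econj_le_coe_iff.2 hg)
      _ ≤ ⨆ g : X →L[ℝ] ℝ, (g x : EReal) - econj f g :=
        le_iSup (fun g : X →L[ℝ] ℝ => (g x : EReal) - econj f g) g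

end FenchelMoreau

section Representer

variable {X : Type*} [NormedAddCommGroup X] [NormedSpace ℝ X] {f : X → EReal}
  {A : X →L[ℝ] X →L[ℝ] ℝ}

lemma autoconjugate_add_econj_sub (hbot : ∀ x, f x ≠ ⊥) (hproper : ∃ x, f x ≠ ⊤)
    (hlsc : LowerSemicontinuous f)
    (hconv : ∀ (x y : X) (t : ℝ), 0 ≤ t → t ≤ 1 →
      f (t • x + (1 - t) • y) ≤ ((t : ℝ) : EReal) * f x + (((1 - t) : ℝ) : EReal) * f y)
    (hanti : ∀ x y : X, A x y = -(A y x)) :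
    Autoconjugate (fun p : X × (X →L[ℝ] ℝ) => f p.1 + econj f (p.2 - A p.1)) := by
  intro x x'
  have hshear : Function.Surjective fun q : X × (X →L[ℝ] ℝ) => (q.1, q.2 + A q.1) :=
    fun q => ⟨(q.1, q.2 - A q.1), by simp⟩
  have hsplit : ∀ q : X × (X →L[ℝ] ℝ),
      ((x' q.1 + (q.2 + A q.1) x : ℝ) : EReal) - (f q.1 + econj f (q.2 + A q.1 - A q.1)) =
        (((x' - A x) q.1 : ℝ) : EReal) - f q.1 + ((q.2 x : EReal) - econj f q.2) := fun q => by
    rw [add_sub_cancel_right, ← EReal.coe_add_sub_add _ _ (hbot q.1) (econj_ne_bot hproper q.2)]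
    congr 2
    simp only [add_apply, sub_apply, hanti q.1 x]
    ring
  unfold conj2
  rw [← hshear.iSup_comp]
  dsimp only
  rw [iSup_congr hsplit, EReal.iSup_prod_add (fun y => (((x' - A x) y : ℝ) : EReal) - f y)
    fun g : X →L[ℝ] ℝ => (g x : EReal) - econj f g, iSup_coe_sub_econj_eq hbot hproper hlsc hconv,
    add_comm]
  rfl

lemma isRepresenter_add_econj_sub (hbot : ∀ x, f x ≠ ⊥) (hproper : ∃ x, f x ≠ ⊤)
    (hanti : ∀ x y : X, A x y = -(A y x)) :
    IsRepresenter (fun p : X × (X →L[ℝ] ℝ) => f p.1 + econj f (p.2 - A p.1))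
      (fun x => {x' | ∃ a ∈ esubdiff f x, x' = a + A x}) := by
  intro x x'
  have hAxx : A x x = 0 := by linarith [hanti x x]
  calc x' ∈ {x' | ∃ a ∈ esubdiff f x, x' = a + A x} ↔ x' - A x ∈ esubdiff f x :=
        ⟨fun ⟨a, ha, h⟩ => by rwa [h, add_sub_cancel_right],
          fun h => ⟨_, h, (sub_add_cancel _ _).symm⟩⟩
    _ ↔ f x + econj f (x' - A x) = ((x' - A x) x : ℝ) := mem_esubdiff_iff_add_econj_eq hbot hproper
    _ ↔ f x + econj f (x' - A x) = (x' x : ℝ) := by rw [sub_apply, hAxx, sub_zero]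

end Representer

theorem stmt5_general {X : Type*} [NormedAddCommGroup X] [NormedSpace ℝ X]
    (f : X → EReal)
    (hbot : ∀ x, f x ≠ ⊥) (hproper : ∃ x, f x ≠ ⊤)
    (hlsc : LowerSemicontinuous f)
    (hconv : ∀ (x y : X) (t : ℝ), 0 ≤ t → t ≤ 1 →
      f (t • x + (1 - t) • y) ≤ ((t : ℝ) : EReal) * f x + (((1 - t) : ℝ) : EReal) * f y)
    (A : X →L[ℝ] X →L[ℝ] ℝ)
    (hanti : ∀ x y : X, A x y = -(A y x)) :
    Autoconjugate (fun p : X × (X →L[ℝ] ℝ) => f p.1 + econj f (p.2 - A p.1)) ∧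
    IsRepresenter (fun p : X × (X →L[ℝ] ℝ) => f p.1 + econj f (p.2 - A p.1))
      (fun x => {x' | ∃ a ∈ esubdiff f x, x' = a + A x}) :=
  ⟨autoconjugate_add_econj_sub hbot hproper hlsc hconv hanti,
    isRepresenter_add_econj_sub hbot hproper hanti⟩

/-- Example 2.6, Ghoussoub. If `f` is proper, lower semicontinuous and
convex, and `A : X → X*` is continuous, linear and antisymmetric, then
`(x,x*) ↦ f(x) + f*(x* - Ax)` is an autoconjugate representer for `∂f + A`. -/
theorem stmt5 {X : Type*} [NormedAddCommGroup X] [NormedSpace ℝ X] [CompleteSpace X]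
    (hrefl : Function.Surjective (NormedSpace.inclusionInDoubleDual ℝ X))
    (f : X → EReal)
    (hbot : ∀ x, f x ≠ ⊥) (hproper : ∃ x, f x ≠ ⊤)
    (hlsc : LowerSemicontinuous f)
    (hconv : ∀ (x y : X) (t : ℝ), 0 ≤ t → t ≤ 1 →
      f (t • x + (1 - t) • y) ≤ ((t : ℝ) : EReal) * f x + (((1 - t) : ℝ) : EReal) * f y)
    (A : X →L[ℝ] X →L[ℝ] ℝ)
    (hanti : ∀ x y : X, A x y = -(A y x)) :
    Autoconjugate (fun p : X × (X →L[ℝ] ℝ) => f p.1 + econj f (p.2 - A p.1)) ∧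
    IsRepresenter (fun p : X × (X →L[ℝ] ℝ) => f p.1 + econj f (p.2 - A p.1))
      (fun x => {x' | ∃ a ∈ esubdiff f x, x' = a + A x}) :=
  stmt5_general f hbot hproper hlsc hconv A hanti
end
end

section
/- Let g: ℝ → (−∞,+∞] satisfy g*(−x) = g(x) ≥ 0 for every x ∈ ℝ, and let q: ℝ → ℝ, q(x) = ½x². Then the function F: ℝ² → (−∞,+∞] defined by F(x,y) = q((x+y)/√2) + g((x−y)/√2) is an autoconjugate representer for the identity operator Id: ℝ → ℝ, x ↦ x; that is, F*(y,x) = F(x,y) for all (x,y) ∈ ℝ², and F(x,y) = xy if and only if y = x. -/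
/-!
Write `(σ, τ) = ((x + y)/√2, (x - y)/√2)`. This change of coordinates is an orthogonal involution
turning the pairing `(u, v) · (y, x)` into `sσ - tτ` and `F` into the separable function
`½s² + g t`. Hence `F*(y, x) = q*(σ) + g*(-τ) = q(σ) + g(τ) = F(x, y)`, because `q* = q`.
Moreover `xy = ½σ² - ½τ²`, so `F(x, y) = xy` forces `g τ = -½τ² ≤ 0 ≤ g τ`, i.e. `τ = 0`;
conversely `g 0 = 0` since `0 ≤ g 0 = g*(0) = sup (-g) ≤ 0`.
-/

noncomputable section
open scoped Classical

/-- The Fenchel conjugate of `g : ℝ → (-∞,+∞]`: `g*(y) = sup_x (xy - g(x))`. -/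
def rconj (g : ℝ → EReal) : ℝ → EReal :=
  fun y => ⨆ x : ℝ, ((x * y : ℝ) : EReal) - g x

/-- The Fenchel conjugate of `F : ℝ × ℝ → (-∞,+∞]`:
`F*(y,x) = sup_{(u,v)} (uy + vx - F(u,v))`. -/
def rconj2 (F : ℝ × ℝ → EReal) : ℝ × ℝ → EReal :=
  fun p => ⨆ q : ℝ × ℝ, ((q.1 * p.1 + q.2 * p.2 : ℝ) : EReal) - F q

open Real

namespace EReal

lemma coe_add_iSup_s11 {ι : Sort*} (c : ℝ) (f : ι → EReal) :
    (c : EReal) + ⨆ i, f i = ⨆ i, ((c : EReal) + f i) := by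
  refine le_antisymm ?_ (iSup_le fun i => by gcongr; exact le_iSup f i)
  rw [add_comm, ← le_sub_iff_add_le (.inl (coe_ne_bot c)) (.inl (coe_ne_top c))]
  refine iSup_le fun i => (le_sub_iff_add_le (.inl (coe_ne_bot c)) (.inl (coe_ne_top c))).2 ?_
  rw [add_comm]
  exact le_iSup (fun i => (c : EReal) + f i) i

lemma coe_add_sub_coe_add (a b c : ℝ) (d : EReal) :
    ((a + b : ℝ) : EReal) - ((c : EReal) + d) = ((a - c : ℝ) : EReal) + ((b : EReal) - d) := by
  induction d with
  | bot => rw [add_bot, sub_bot (coe_ne_bot _), sub_bot (coe_ne_bot _), coe_add_top]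
  | coe d => norm_cast; ring
  | top => simp

lemma iSup_prod_coe_add_of_isGreatest {α β : Type*} {a : α → ℝ} {c : ℝ}
    (ha : IsGreatest (Set.range a) c) (b : β → EReal) :
    ⨆ p : α × β, ((a p.1 : EReal) + b p.2) = (c : EReal) + ⨆ t, b t := by
  obtain ⟨⟨s₀, rfl⟩, hmax⟩ := ha
  simp_rw [iSup_prod, ← coe_add_iSup_s11]
  exact le_antisymm
    (iSup_le fun s => by gcongr; exact_mod_cast hmax ⟨s, rfl⟩)
    (le_iSup (fun s => (a s : EReal) + ⨆ t, b t) s₀)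

end EReal

lemma rconj_zero_nonpos {g : ℝ → EReal} (hg : ∀ x, 0 ≤ g x) : rconj g 0 ≤ 0 :=
  iSup_le fun x => by
    rw [mul_zero, EReal.coe_zero, zero_sub]
    exact EReal.neg_le_zero.2 (hg x)

lemma isGreatest_range_mul_sub_half_sq (σ : ℝ) :
    IsGreatest (Set.range fun s : ℝ => s * σ - 1 / 2 * s ^ 2) (1 / 2 * σ ^ 2) :=
  ⟨⟨σ, by ring⟩, by rintro _ ⟨s, rfl⟩; nlinarith [sq_nonneg (s - σ)]⟩

def diagRot (p : ℝ × ℝ) : ℝ × ℝ := ((p.1 + p.2) / √2, (p.1 - p.2) / √2)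

lemma diagRot_involutive : Function.Involutive diagRot := by
  rintro ⟨x, y⟩
  simp only [diagRot, ← add_div, ← sub_div, div_div, mul_self_sqrt zero_le_two, Prod.mk.injEq]
  constructor <;> ring

lemma diagRot_pairing (p q : ℝ × ℝ) :
    p.1 * q.2 + p.2 * q.1 = (diagRot p).1 * (diagRot q).1 - (diagRot p).2 * (diagRot q).2 := by
  simp only [diagRot, div_mul_div_comm, ← sub_div, mul_self_sqrt zero_le_two]
  ring

lemma diagRot_pairing_diagRot (p q : ℝ × ℝ) :
    (diagRot p).1 * (diagRot q).2 + (diagRot p).2 * (diagRot q).1 = p.1 * q.1 - p.2 * q.2 := by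
  rw [diagRot_pairing, diagRot_involutive, diagRot_involutive]

lemma diagRot_snd_eq_fst_iff (p : ℝ × ℝ) : (diagRot p).2 = (diagRot p).1 ↔ p.2 = 0 := by
  simp only [diagRot, div_left_inj' (sqrt_ne_zero'.2 zero_lt_two)]
  constructor <;> intro h <;> linarith

section SeparableInDiagCoordinates

variable {g : ℝ → EReal} {F : ℝ × ℝ → EReal}

lemma rconj2_swap_diagRot
    (hF : ∀ p, F (diagRot p) = ((1 / 2 * p.1 ^ 2 : ℝ) : EReal) + g p.2) (σ τ : ℝ) :
    rconj2 F (diagRot (σ, τ)).swap = ((1 / 2 * σ ^ 2 : ℝ) : EReal) + rconj g (-τ) :=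
  calc rconj2 F (diagRot (σ, τ)).swap
      = ⨆ q : ℝ × ℝ, ((q.1 * σ - q.2 * τ : ℝ) : EReal) - F (diagRot q) := by
        rw [rconj2, ← diagRot_involutive.surjective.iSup_comp]
        simp_rw [Prod.fst_swap, Prod.snd_swap, diagRot_pairing_diagRot]
    _ = ⨆ q : ℝ × ℝ, ((q.1 * σ - 1 / 2 * q.1 ^ 2 : ℝ) : EReal) + ((q.2 * -τ : ℝ) - g q.2) := by
        simp_rw [hF, ← EReal.coe_add_sub_coe_add, mul_neg, sub_eq_add_neg]
    _ = ((1 / 2 * σ ^ 2 : ℝ) : EReal) + rconj g (-τ) :=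
        EReal.iSup_prod_coe_add_of_isGreatest (isGreatest_range_mul_sub_half_sq σ)
          fun t => ((t * -τ : ℝ) : EReal) - g t

lemma apply_eq_mul_iff_of_diagRot
    (hF : ∀ p, F (diagRot p) = ((1 / 2 * p.1 ^ 2 : ℝ) : EReal) + g p.2)
    (hg : ∀ t, 0 ≤ g t) (hg0 : g 0 = 0) (p : ℝ × ℝ) :
    F p = ((p.1 * p.2 : ℝ) : EReal) ↔ p.2 = p.1 := by
  obtain ⟨⟨σ, τ⟩, rfl⟩ := diagRot_involutive.surjective p
  have hprod : (diagRot (σ, τ)).1 * (diagRot (σ, τ)).2 = 1 / 2 * σ ^ 2 + -(1 / 2 * τ ^ 2) := by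
    linear_combination diagRot_pairing_diagRot (σ, τ) (σ, τ) / 2
  rw [hF, hprod, EReal.coe_add, (EReal.addLECancellable_coe _).inj, diagRot_snd_eq_fst_iff]
  constructor
  · intro h
    have := EReal.coe_nonneg.1 (h ▸ hg τ)
    nlinarith [sq_nonneg τ]
  · rintro (rfl : τ = 0)
    simp [hg0]

end SeparableInDiagCoordinates

theorem stmt11_general (g : ℝ → EReal)
    (hg : ∀ x : ℝ, rconj g (-x) = g x ∧ 0 ≤ g x)
    (F : ℝ × ℝ → EReal)
    (hF : ∀ x y : ℝ,
      F (x, y) = ((1 / 2 * ((x + y) / Real.sqrt 2) ^ 2 : ℝ) : EReal)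
        + g ((x - y) / Real.sqrt 2)) :
    (∀ x y : ℝ, rconj2 F (y, x) = F (x, y)) ∧
    (∀ x y : ℝ, F (x, y) = ((x * y : ℝ) : EReal) ↔ y = x) := by
  have hF_diagRot (p : ℝ × ℝ) : F (diagRot p) = ((1 / 2 * p.1 ^ 2 : ℝ) : EReal) + g p.2 := by
    conv_rhs => rw [← diagRot_involutive p]
    exact hF _ _
  have hg0 : g 0 = 0 := by
    refine le_antisymm ?_ (hg 0).2
    rw [← (hg 0).1, neg_zero]
    exact rconj_zero_nonpos fun x => (hg x).2
  refine ⟨fun x y => ?_, fun x y =>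
    apply_eq_mul_iff_of_diagRot hF_diagRot (fun t => (hg t).2) hg0 (x, y)⟩
  obtain ⟨⟨σ, τ⟩, hp⟩ := diagRot_involutive.surjective (x, y)
  rw [← Prod.swap_prod_mk, ← hp, rconj2_swap_diagRot hF_diagRot, (hg τ).1, hF_diagRot]

/-- Theorem 4.2. If `g : ℝ → (-∞,+∞]` satisfies `g*(-x) = g(x) ≥ 0`
for all `x`, then `F(x,y) = ½((x+y)/√2)² + g((x-y)/√2)` is an autoconjugate representer
for the identity on `ℝ`: `F*(y,x) = F(x,y)` for all `(x,y)`, and `F(x,y) = xy ↔ y = x`. -/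
theorem stmt11 (g : ℝ → EReal) (hbot : ∀ x, g x ≠ ⊥)
    (hg : ∀ x : ℝ, rconj g (-x) = g x ∧ 0 ≤ g x)
    (F : ℝ × ℝ → EReal)
    (hF : ∀ x y : ℝ,
      F (x, y) = ((1 / 2 * ((x + y) / Real.sqrt 2) ^ 2 : ℝ) : EReal)
        + g ((x - y) / Real.sqrt 2)) :
    (∀ x y : ℝ, rconj2 F (y, x) = F (x, y)) ∧
    (∀ x y : ℝ, F (x, y) = ((x * y : ℝ) : EReal) ↔ y = x) :=
  stmt11_general g hg F hF
end
end

section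
/- Let A: X → X* be continuous, linear, monotone, and symmetric, with closed range, and let F: X×X* → (−∞,+∞]. Then F = 𝒞_A (where 𝒞_A = q_A ⊕ q_A*) if and only if the following three conditions hold: (i) F is autoconjugate; (ii) F(0,0) = 0; (iii) F(x,Ay) = F(y,Ax) for all (x,y) ∈ X×X. -/
noncomputable section
open scoped Classical
open Filter Topology

/-!
Write `𝒞_A = q_A ⊕ q_A*`. Since `A` is monotone and symmetric, `q_A*(Ay) = q_A(y)`, so
`𝒞_A(x, Ay) = q_A(x) + q_A(y)`, and Fenchel–Young in both variables makes `𝒞_A` autoconjugate.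
Conversely, let `F` satisfy (i)–(iii). Testing `F*(Ay, x)` at `(y, Ax)` and using (iii) gives
`F(x, Ay) ≥ ⟨x, Ax⟩ + ⟨y, Ay⟩ - F(x, Ay)`, i.e. `F ≥ 𝒞_A` on `X × range A`. If `x* ∉ range A`,
closedness of the range and reflexivity yield `y₀ ∈ ker A` with `⟨y₀, x*⟩ = 1`; by (ii) and (iii)
`F(t y₀, 0) = F(0, 0) = 0`, so `F(x, x*) = F*(x*, x) ≥ t` for all `t`. Hence `F ≥ 𝒞_A`, and
conjugation reverses this to `F = F* ≤ 𝒞_A* = 𝒞_A`.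
-/

lemma EReal.coe_div_two_le_of_coe_sub_le_self {r : ℝ} {a : EReal} (h : (r : EReal) - a ≤ a) :
    ((r / 2 : ℝ) : EReal) ≤ a := by
  induction a with
  | bot => simp at h
  | coe a =>
    have : r - a ≤ a := mod_cast h
    exact mod_cast (by linarith : r / 2 ≤ a)
  | top => exact le_top

section Conjugate

variable {X : Type*} [NormedAddCommGroup X] [NormedSpace ℝ X]

lemma le_legendre (φ : X → ℝ) (x' : X →L[ℝ] ℝ) (y : X) :
    ((x' y - φ y : ℝ) : EReal) ≤ legendre φ x' :=
  le_iSup (fun y => ((x' y - φ y : ℝ) : EReal)) y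

lemma apply_le_add_legendre (φ : X → ℝ) (x' : X →L[ℝ] ℝ) (y : X) :
    ((x' y : ℝ) : EReal) ≤ (φ y : EReal) + legendre φ x' := by
  rw [add_comm, ← EReal.sub_le_iff_le_add (.inl (EReal.coe_ne_bot _)) (.inl (EReal.coe_ne_top _))]
  exact le_legendre φ x' y

lemma conj2_anti {F G : X × (X →L[ℝ] ℝ) → EReal} (h : G ≤ F) : conj2 F ≤ conj2 G :=
  fun _ => iSup_mono fun q => EReal.sub_le_sub le_rfl (h q)

lemma Autoconjugate.eq_of_le {F G : X × (X →L[ℝ] ℝ) → EReal} (hF : Autoconjugate F)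
    (hG : Autoconjugate G) (h : G ≤ F) : F = G := by
  refine le_antisymm (fun ⟨x, x'⟩ => ?_) h
  rw [← hF x x', ← hG x x']
  exact conj2_anti h (x', x)

end Conjugate

section Quadratic

variable {X : Type*} [NormedAddCommGroup X] [NormedSpace ℝ X] {A : X →L[ℝ] X →L[ℝ] ℝ}

/-- `𝒞_A = q_A ⊕ q_A*`. -/
def fenchelSum (A : X →L[ℝ] X →L[ℝ] ℝ) : X × (X →L[ℝ] ℝ) → EReal :=
  fun p => (qF A p.1 : EReal) + legendre (qF A) p.2

lemma apply_le_qF_add_qF (hmono : ∀ x : X, 0 ≤ A x x) (hsym : ∀ x y : X, A x y = A y x)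
    (x y : X) : A x y ≤ qF A x + qF A y := by
  have hexp : A (x - y) (x - y) = A x x - 2 * A x y + A y y := by
    simp only [map_sub, sub_apply, hsym y x]
    ring
  have := hmono (x - y)
  simp only [qF]
  linarith

lemma legendre_qF_apply (hmono : ∀ x : X, 0 ≤ A x x) (hsym : ∀ x y : X, A x y = A y x)
    (y : X) : legendre (qF A) (A y) = qF A y := by
  refine le_antisymm (iSup_le fun z => ?_) (le_of_eq_of_le ?_ (le_legendre (qF A) (A y) y))
  · have := apply_le_qF_add_qF hmono hsym y z
    exact mod_cast (by linarith : A y z - qF A z ≤ qF A y)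
  · simp only [qF]
    ring_nf

lemma fenchelSum_apply_range (hmono : ∀ x : X, 0 ≤ A x x) (hsym : ∀ x y : X, A x y = A y x)
    (x y : X) : fenchelSum A (x, A y) = (qF A x + qF A y : ℝ) := by
  rw [fenchelSum, legendre_qF_apply hmono hsym, EReal.coe_add]

lemma autoconjugate_fenchelSum (hmono : ∀ x : X, 0 ≤ A x x) (hsym : ∀ x y : X, A x y = A y x) :
    Autoconjugate (fenchelSum A) := by
  intro x x'
  refine le_antisymm (iSup_le fun ⟨u, u'⟩ => EReal.sub_le_of_le_add ?_) ?_
  · calc ((x' u + u' x : ℝ) : EReal)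
        ≤ ((qF A u : EReal) + legendre (qF A) x') + ((qF A x : EReal) + legendre (qF A) u') := by
          rw [EReal.coe_add]
          exact add_le_add (apply_le_add_legendre _ x' u) (apply_le_add_legendre _ u' x)
      _ = fenchelSum A (x, x') + fenchelSum A (u, u') := by
          simp only [fenchelSum]
          ac_rfl
  · have hb := EReal.coe_ne_bot (qF A x)
    have ht := EReal.coe_ne_top (qF A x)
    rw [fenchelSum, add_comm, ← EReal.le_sub_iff_add_le (.inl hb) (.inl ht)]
    refine iSup_le fun u => ?_
    rw [EReal.le_sub_iff_add_le (.inl hb) (.inl ht)]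
    refine le_of_eq_of_le ?_ (le_iSup _ (u, A x))
    rw [fenchelSum_apply_range hmono hsym]
    norm_cast
    simp only [qF]
    ring

end Quadratic

section Representation

variable {X : Type*} [NormedAddCommGroup X] [NormedSpace ℝ X]

lemma exists_apply_eq_one_of_notMem_closed_submodule
    (hrefl : Function.Surjective (NormedSpace.inclusionInDoubleDual ℝ X))
    {M : Submodule ℝ (X →L[ℝ] ℝ)} (hM : IsClosed (M : Set (X →L[ℝ] ℝ)))
    {x' : X →L[ℝ] ℝ} (hx' : x' ∉ M) :
    ∃ y : X, (∀ m ∈ M, m y = 0) ∧ x' y = 1 := by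
  obtain ⟨f, u, hfM, hux'⟩ := geometric_hahn_banach_closed_point M.convex hM hx'
  have hfM_zero : ∀ m ∈ M, f m = 0 := by
    intro m hm
    by_contra hm0
    have := hfM (((u + 1) / f m) • m) (M.smul_mem _ hm)
    rw [map_smul, smul_eq_mul, div_mul_cancel₀ _ hm0] at this
    linarith
  have hfx' : 0 < f x' := (by simpa using hfM 0 M.zero_mem : 0 < u).trans hux'
  obtain ⟨y, hy⟩ := hrefl f
  have hy_apply : ∀ m : X →L[ℝ] ℝ, m y = f m := fun m => by rw [← hy]; rfl
  refine ⟨(f x')⁻¹ • y, fun m hm => ?_, ?_⟩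
  · rw [map_smul, hy_apply, hfM_zero m hm, smul_zero]
  · rw [map_smul, hy_apply, smul_eq_mul, inv_mul_cancel₀ hfx'.ne']

variable {A : X →L[ℝ] X →L[ℝ] ℝ} {F : X × (X →L[ℝ] ℝ) → EReal}

lemma Autoconjugate.apply_eq_top_of_notMem_range
    (hrefl : Function.Surjective (NormedSpace.inclusionInDoubleDual ℝ X))
    (hsym : ∀ x y : X, A x y = A y x) (hran : IsClosed (Set.range A : Set (X →L[ℝ] ℝ)))
    (hauto : Autoconjugate F) (hzero : F (0, 0) = 0) (hsymF : ∀ x y : X, F (x, A y) = F (y, A x))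
    (x : X) {x' : X →L[ℝ] ℝ} (hx' : x' ∉ Set.range A) : F (x, x') = ⊤ := by
  obtain ⟨y₀, hy₀, hx'y₀⟩ := exists_apply_eq_one_of_notMem_closed_submodule hrefl
    (M := LinearMap.range (A : X →ₗ[ℝ] X →L[ℝ] ℝ)) (by rwa [LinearMap.coe_range])
    (by rwa [← SetLike.mem_coe, LinearMap.coe_range])
  have hAy₀ : A y₀ = 0 := by
    ext z
    rw [hsym, hy₀ (A z) ⟨z, rfl⟩, zero_apply]
  have hF_ker : ∀ t : ℝ, F (t • y₀, 0) = 0 := fun t => by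
    simpa only [map_zero, map_smul, hAy₀, smul_zero, hzero] using hsymF (t • y₀) 0
  rw [← hauto, EReal.eq_top_iff_forall_lt]
  intro r
  refine lt_of_lt_of_le ?_ (le_iSup _ ((r + 1) • y₀, (0 : X →L[ℝ] ℝ)))
  simp only [hF_ker, map_smul, hx'y₀, zero_apply, smul_eq_mul, mul_one, add_zero, sub_zero]
  exact mod_cast lt_add_one r

lemma Autoconjugate.qF_add_qF_le (hauto : Autoconjugate F)
    (hsymF : ∀ x y : X, F (x, A y) = F (y, A x)) (x y : X) :
    ((qF A x + qF A y : ℝ) : EReal) ≤ F (x, A y) := by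
  have h := le_iSup (fun q : X × (X →L[ℝ] ℝ) => ((A y q.1 + q.2 x : ℝ) : EReal) - F q) (y, A x)
  change _ ≤ conj2 F (A y, x) at h
  rw [hsymF y x, hauto x (A y)] at h
  convert EReal.coe_div_two_le_of_coe_sub_le_self h using 2
  simp only [qF]
  ring

lemma Autoconjugate.fenchelSum_le
    (hrefl : Function.Surjective (NormedSpace.inclusionInDoubleDual ℝ X))
    (hmono : ∀ x : X, 0 ≤ A x x) (hsym : ∀ x y : X, A x y = A y x)
    (hran : IsClosed (Set.range A : Set (X →L[ℝ] ℝ)))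
    (hauto : Autoconjugate F) (hzero : F (0, 0) = 0) (hsymF : ∀ x y : X, F (x, A y) = F (y, A x)) :
    fenchelSum A ≤ F := by
  rintro ⟨x, x'⟩
  by_cases hx' : x' ∈ Set.range A
  · obtain ⟨y, rfl⟩ := hx'
    rw [fenchelSum_apply_range hmono hsym]
    exact hauto.qF_add_qF_le hsymF x y
  · rw [hauto.apply_eq_top_of_notMem_range hrefl hsym hran hzero hsymF x hx']
    exact le_top

end Representation

theorem stmt12_general {X : Type*} [NormedAddCommGroup X] [NormedSpace ℝ X]
    (hrefl : Function.Surjective (NormedSpace.inclusionInDoubleDual ℝ X))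
    (A : X →L[ℝ] X →L[ℝ] ℝ)
    (hmono : ∀ x : X, 0 ≤ A x x)
    (hsym : ∀ x y : X, A x y = A y x)
    (hran : IsClosed (Set.range A : Set (X →L[ℝ] ℝ)))
    (F : X × (X →L[ℝ] ℝ) → EReal) :
    (∀ (x : X) (x' : X →L[ℝ] ℝ), F (x, x') = ((qF A x : ℝ) : EReal) + legendre (qF A) x')
      ↔ (Autoconjugate F ∧ F (0, 0) = 0 ∧ ∀ x y : X, F (x, A y) = F (y, A x)) := by
  constructor
  · intro hF
    obtain rfl : F = fenchelSum A := funext fun p => hF p.1 p.2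
    refine ⟨autoconjugate_fenchelSum hmono hsym, ?_, fun x y => ?_⟩
    · simpa [qF] using fenchelSum_apply_range hmono hsym (0 : X) 0
    · rw [fenchelSum_apply_range hmono hsym, fenchelSum_apply_range hmono hsym, add_comm]
  · rintro ⟨hauto, hzero, hsymF⟩ x x'
    have hle := hauto.fenchelSum_le hrefl hmono hsym hran hzero hsymF
    exact congrFun (hauto.eq_of_le (autoconjugate_fenchelSum hmono hsym) hle) (x, x')

/-- Theorem 4.4. Let `A : X → X*` be continuous, linear, monotone and
symmetric with closed range. Then `F = 𝒞_A = q_A ⊕ q_A*` if and only if `F` is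
autoconjugate, `F(0,0) = 0`, and `F(x,Ay) = F(y,Ax)` for all `x,y`. -/
theorem stmt12 {X : Type*} [NormedAddCommGroup X] [NormedSpace ℝ X] [CompleteSpace X]
    (hrefl : Function.Surjective (NormedSpace.inclusionInDoubleDual ℝ X))
    (A : X →L[ℝ] X →L[ℝ] ℝ)
    (hmono : ∀ x : X, 0 ≤ A x x)
    (hsym : ∀ x y : X, A x y = A y x)
    (hran : IsClosed (Set.range A : Set (X →L[ℝ] ℝ)))
    (F : X × (X →L[ℝ] ℝ) → EReal)
    (hbot : ∀ p, F p ≠ ⊥) :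
    (∀ (x : X) (x' : X →L[ℝ] ℝ), F (x, x') = ((qF A x : ℝ) : EReal) + legendre (qF A) x')
      ↔ (Autoconjugate F ∧ F (0, 0) = 0 ∧ ∀ x y : X, F (x, A y) = F (y, A x)) :=
  stmt12_general hrefl A hmono hsym hran F
end
end
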